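/- Lemma 5.3 (ℓ∞ projection onto the beta-min set): Fix c > 0 and define Ω0 = { θ ∈ ℝ^p : |θ_i| ≥ c for every i with θ_i ≠ 0 }. Define the shrinkage map S(x, c) = x if |x| ≥ c; S(x,c) = c if x ∈ (c/2, c); S(x,c) = 0 if x ∈ [−c/2, c/2]; S(x,c) = −c if x ∈ (−c, −c/2). Then for any v ∈ ℝ^p, the vector θ* with θ*_i = S(v_i, c) belongs to Ω0 and, for every diagonal matrix D ∈ ℝ^{p×p}, θ* minimizes ‖D(v − θ)‖_∞ over θ ∈ Ω0, i.e., ‖D(v − θ*)‖_∞ ≤ ‖D(v − θ)‖_∞ for all θ ∈ Ω0. -/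
import Mathlib


open scoped Classical

noncomputable section

/-- ℓ∞ norm of a finite vector. -/
def linf {m : ℕ} (v : Fin m → ℝ) : ℝ := ⨆ i, |v i|

/-- The shrinkage map `S(x,c)`. -/
def shrink (c x : ℝ) : ℝ :=
  if c ≤ |x| then x
  else if c / 2 < x then c
  else if x < -(c / 2) then -c
  else 0

lemma shrink_mem (c x : ℝ) (hc : 0 < c) : shrink c x ≠ 0 → c ≤ |shrink c x| := by
  unfold shrink
  split_ifs with h1 h2 h3 <;> intro h
  · exact h1
  · rw [abs_of_pos hc]
  · rw [abs_neg, abs_of_pos hc]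
  · exact absurd rfl h

lemma shrink_opt (c x θ : ℝ) (hc : 0 < c) (hθ : θ = 0 ∨ c ≤ |θ|) :
    |x - shrink c x| ≤ |x - θ| := by
  have hx := abs_cases x
  have hθ' : θ = 0 ∨ c ≤ θ ∨ c ≤ -θ := by
    rcases hθ with h | h
    · exact Or.inl h
    · exact Or.inr (le_abs.mp h)
  have ht := abs_cases (x - θ)
  have hs := abs_cases (x - shrink c x)
  unfold shrink at *
  split_ifs at * with h1 h2 h3 <;>
    rcases hθ' with rfl | h | h <;> rcases hx with ⟨e, _⟩ | ⟨e, _⟩ <;>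
    rcases ht with ⟨e1, _⟩ | ⟨e1, _⟩ <;> rcases hs with ⟨e2, _⟩ | ⟨e2, _⟩ <;>
    simp only [e1, e2] <;> linarith

/-- ℓ∞ projection onto the beta-min set: the coordinatewise shrinkage `θ*ᵢ = S(vᵢ,c)`
belongs to `Ω0 = {θ : every nonzero coordinate of θ has magnitude ≥ c}` and minimizes
`‖D(v − θ)‖_∞` over `θ ∈ Ω0` for every diagonal matrix `D`. -/
theorem betamin_projection (p : ℕ) (c : ℝ) (hc : 0 < c) (v : Fin p → ℝ)
    (Ω0 : Set (Fin p → ℝ))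
    (hΩ : Ω0 = {θ : Fin p → ℝ | ∀ i, θ i ≠ 0 → c ≤ |θ i|}) :
    (fun i => shrink c (v i)) ∈ Ω0 ∧
      ∀ d : Fin p → ℝ, ∀ θ ∈ Ω0,
        linf (fun i => d i * (v i - shrink c (v i)))
          ≤ linf (fun i => d i * (v i - θ i)) := by
  subst hΩ
  constructor
  · intro i hi
    exact shrink_mem c (v i) hc hi
  · intro d θ hθ
    unfold linf
    have hbdd : BddAbove (Set.range fun i => |d i * (v i - θ i)|) :=
      (Set.finite_range _).bddAbove
    apply ciSup_mono hbdd
    intro i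
    rw [abs_mul, abs_mul]
    apply mul_le_mul_of_nonneg_left _ (abs_nonneg _)
    apply shrink_opt c (v i) (θ i) hc
    by_cases h : θ i = 0
    · exact Or.inl h
    · exact Or.inr (hθ i h)

end
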